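/- arXiv:2003.01435 — 2 statements merged into one kernel-verified Lean document; each statement's English description precedes it below -/
import Mathlib

section
/- Let B ⊆ A be central hyperplane arrangements in V = K^ℓ, both free, and suppose θ_1,...,θ_ℓ is a basis of D(B) such that θ_i ∈ D(A) for 1 ≤ i ≤ ℓ−q. Let X ∈ L(A) be an intersection of hyperplanes of A such that no hyperplane of B contains X (i.e. A_X ∩ B = ∅). Then rk(X) = ℓ − dim(X) ≤ q. -/
open MvPolynomial

/-!
Choose `z ∈ X` off every hyperplane of `B` and evaluate derivations at `z`. Since `θ` spans
`D(B)` and `Q • ∂ⱼ ∈ D(B)` for `Q = ∏_{c ∈ B} linForm c` with `Q(z) ≠ 0`, the vectors `θᵢ(z)` span,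
hence form a basis of, `K^ℓ`. For `i < ℓ - q` the derivation `θᵢ` is logarithmic along every
hyperplane of `A`, so `θᵢ(z)` is tangent to each hyperplane of `A` through `z`, i.e. lies in `X`.
These are `ℓ - q` independent vectors of `X`.
-/

noncomputable def linForm {K : Type*} [CommRing K] {ℓ : ℕ} (c : Fin ℓ → K) :
    MvPolynomial (Fin ℓ) K :=
  ∑ i, MvPolynomial.C (c i) * MvPolynomial.X i

noncomputable def dualForm {K : Type*} [Field K] {ℓ : ℕ} (c : Fin ℓ → K) :
    (Fin ℓ → K) →ₗ[K] K :=
  ∑ i, c i • LinearMap.proj i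

theorem Submodule.exists_mem_forall_apply_ne_zero {K V ι : Type*} [Field K] [Infinite K]
    [AddCommGroup V] [Module K V] {X : Submodule K V} {s : Finset ι} {f : ι → V →ₗ[K] K}
    (hX : ∀ i ∈ s, ¬ X ≤ LinearMap.ker (f i)) : ∃ z ∈ X, ∀ i ∈ s, f i z ≠ 0 := by
  by_contra! h
  obtain ⟨i, hi⟩ := Subspace.exists_eq_top_of_iUnion_eq_univ
    (p := fun i : s => (LinearMap.ker (f i)).comap X.subtype) <| by
      refine Set.eq_univ_of_forall fun z => Set.mem_iUnion.2 ?_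
      obtain ⟨i, hi, hiz⟩ := h z z.2
      exact ⟨⟨i, hi⟩, hiz⟩
  exact hX i i.2 (Submodule.comap_subtype_eq_top.1 hi)

section LogDerivation

variable {K : Type*} [Field K] {ℓ : ℕ}

/-- `θ ∈ D(A)`, the module of logarithmic derivations of `A`. -/
def IsLogDerivation (A : Finset (Fin ℓ → K))
    (θ : Derivation K (MvPolynomial (Fin ℓ) K) (MvPolynomial (Fin ℓ) K)) : Prop :=
  ∀ c ∈ A, θ (linForm c) ∈ Ideal.span {linForm c}

/-- The value `θ(z) = ∑ⱼ θ(xⱼ)(z) ∂ⱼ` at `z` of a polynomial vector field, written in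
coordinates. -/
noncomputable def evalDerivation (z : Fin ℓ → K) :
    Derivation K (MvPolynomial (Fin ℓ) K) (MvPolynomial (Fin ℓ) K) →ₛₗ[eval z] (Fin ℓ → K) where
  toFun θ j := eval z (θ (X j))
  map_add' θ η := by ext j; simp
  map_smul' f θ := by ext j; simp

theorem dualForm_apply (c w : Fin ℓ → K) : dualForm c w = ∑ j, c j * w j := by
  simp [dualForm]

theorem eval_linForm (c z : Fin ℓ → K) : eval z (linForm c) = dualForm c z := by
  simp [linForm, dualForm_apply]

theorem eval_derivation_linForm (θ : Derivation K (MvPolynomial (Fin ℓ) K) (MvPolynomial (Fin ℓ) K))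
    (c z : Fin ℓ → K) : eval z (θ (linForm c)) = dualForm c (evalDerivation z θ) := by
  simp [linForm, dualForm_apply, evalDerivation, ← smul_eq_C_mul]

theorem evalDerivation_mem_iInf_ker {A : Finset (Fin ℓ → K)}
    {θ : Derivation K (MvPolynomial (Fin ℓ) K) (MvPolynomial (Fin ℓ) K)}
    (hθ : IsLogDerivation A θ) {z : Fin ℓ → K} (hz : z ∈ ⨅ c ∈ A, LinearMap.ker (dualForm c)) :
    evalDerivation z θ ∈ ⨅ c ∈ A, LinearMap.ker (dualForm c) := by
  simp only [Submodule.mem_iInf, LinearMap.mem_ker] at hz ⊢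
  intro c hc
  obtain ⟨g, hg⟩ := Ideal.mem_span_singleton'.1 (hθ c hc)
  rw [← eval_derivation_linForm, ← hg, map_mul, eval_linForm, hz c hc, mul_zero]

theorem isLogDerivation_prod_smul_pderiv (B : Finset (Fin ℓ → K)) (j : Fin ℓ) :
    IsLogDerivation B ((∏ c ∈ B, linForm c) • pderiv j) := fun _ hc =>
  Ideal.mem_span_singleton.2 ((Finset.dvd_prod_of_mem _ hc).mul_right _)

theorem evalDerivation_smul_pderiv (z : Fin ℓ → K) (Q : MvPolynomial (Fin ℓ) K) (j : Fin ℓ) :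
    evalDerivation z (Q • pderiv j) = Pi.single j (eval z Q) := by
  ext k
  rcases eq_or_ne j k with rfl | hjk
  · simp [evalDerivation]
  · simp [evalDerivation, Pi.single_apply, hjk.symm]

theorem span_evalDerivation_eq_top {B : Finset (Fin ℓ → K)} {ι : Type*} [Fintype ι]
    {θ : ι → Derivation K (MvPolynomial (Fin ℓ) K) (MvPolynomial (Fin ℓ) K)}
    (hspan : ∀ η, IsLogDerivation B η → η ∈ Submodule.span (MvPolynomial (Fin ℓ) K) (Set.range θ))
    {z : Fin ℓ → K} (hz : ∀ c ∈ B, dualForm c z ≠ 0) :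
    Submodule.span K (Set.range fun i => evalDerivation z (θ i)) = ⊤ := by
  set Q := ∏ c ∈ B, linForm c
  have hQz : eval z Q ≠ 0 := by
    simpa [Q, map_prod, eval_linForm, Finset.prod_ne_zero_iff] using hz
  have hsingle (j : Fin ℓ) :
      Pi.single j (eval z Q) ∈ Submodule.span K (Set.range fun i => evalDerivation z (θ i)) := by
    obtain ⟨f, hf⟩ := (Submodule.mem_span_range_iff_exists_fun _).1
      (hspan _ (isLogDerivation_prod_smul_pderiv B j))
    rw [← evalDerivation_smul_pderiv, ← hf, map_sum]
    exact Submodule.sum_mem _ fun i _ => by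
      rw [map_smulₛₗ]
      exact Submodule.smul_mem _ _ (Submodule.subset_span ⟨i, rfl⟩)
  rw [eq_top_iff, ← (Pi.basisFun K (Fin ℓ)).span_eq, Submodule.span_le]
  rintro _ ⟨j, rfl⟩
  have := Submodule.smul_mem _ (eval z Q)⁻¹ (hsingle j)
  rwa [← Pi.single_smul, smul_eq_mul, inv_mul_cancel₀ hQz, ← Pi.basisFun_apply] at this

end LogDerivation

theorem statement3_general {K : Type*} [Field K] [CharZero K] {ℓ : ℕ}
    (A B : Finset (Fin ℓ → K))
    (q : ℕ)
    (θ : Fin ℓ → Derivation K (MvPolynomial (Fin ℓ) K) (MvPolynomial (Fin ℓ) K))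
    (hspan : ∀ η : Derivation K (MvPolynomial (Fin ℓ) K) (MvPolynomial (Fin ℓ) K),
      (∀ c ∈ B, η (linForm c) ∈ Ideal.span {linForm c}) →
      η ∈ Submodule.span (MvPolynomial (Fin ℓ) K) (Set.range θ))
    (hθA : ∀ i : Fin ℓ, (i : ℕ) < ℓ - q → ∀ c ∈ A,
      θ i (linForm c) ∈ Ideal.span {linForm c})
    (X : Submodule K (Fin ℓ → K))
    (hX : ∃ Carr : Finset (Fin ℓ → K), Carr ⊆ A ∧
      X = ⨅ c ∈ Carr, LinearMap.ker (dualForm c))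
    (hXB : ∀ c ∈ B, ¬ X ≤ LinearMap.ker (dualForm c)) :
    ℓ - q ≤ Module.finrank K X := by
  obtain ⟨Carr, hCA, rfl⟩ := hX
  obtain ⟨z, hzX, hzB⟩ := Submodule.exists_mem_forall_apply_ne_zero hXB
  set v := fun i => evalDerivation z (θ i)
  have hv : LinearIndependent K v :=
    linearIndependent_of_top_le_span_of_card_eq_finrank
      (span_evalDerivation_eq_top hspan hzB).ge (by simp)
  set ι := Fin.castLE (Nat.sub_le ℓ q)
  have hvX : Submodule.span K (Set.range (v ∘ ι)) ≤ ⨅ c ∈ Carr, LinearMap.ker (dualForm c) := by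
    rw [Submodule.span_le]
    rintro _ ⟨i, rfl⟩
    exact evalDerivation_mem_iInf_ker (fun c hc => hθA (ι i) i.2 c (hCA hc)) hzX
  calc ℓ - q = Module.finrank K (Submodule.span K (Set.range (v ∘ ι))) := by
        rw [finrank_span_eq_card (hv.comp ι (Fin.castLE_injective _)), Fintype.card_fin]
    _ ≤ _ := Submodule.finrank_mono hvX

/-- Proposition 2.11: let `B ⊆ A` be free central arrangements in `K^ℓ`, let
`θ_1,…,θ_ℓ` be an `S`-basis of `D(B)` with `θ_i ∈ D(A)` for `1 ≤ i ≤ ℓ−q` (0-indexed: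
`i.val < ℓ − q`), and let `X ∈ L(A)` be an intersection of hyperplanes of `A` not
contained in any hyperplane of `B` (`A_X ∩ B = ∅`).  Then
`rk(X) = ℓ − dim X ≤ q`, i.e. `dim X ≥ ℓ − q`. -/
theorem statement3 {K : Type*} [Field K] [CharZero K] {ℓ : ℕ}
    (A B : Finset (Fin ℓ → K)) (hA : ∀ c ∈ A, c ≠ 0) (hBA : B ⊆ A)
    (q : ℕ) (hq : q ≤ ℓ)
    (θ : Fin ℓ → Derivation K (MvPolynomial (Fin ℓ) K) (MvPolynomial (Fin ℓ) K))
    (hθB : ∀ i, ∀ c ∈ B, θ i (linForm c) ∈ Ideal.span {linForm c})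
    (hindep : LinearIndependent (MvPolynomial (Fin ℓ) K) θ)
    (hspan : ∀ η : Derivation K (MvPolynomial (Fin ℓ) K) (MvPolynomial (Fin ℓ) K),
      (∀ c ∈ B, η (linForm c) ∈ Ideal.span {linForm c}) →
      η ∈ Submodule.span (MvPolynomial (Fin ℓ) K) (Set.range θ))
    (hθA : ∀ i : Fin ℓ, (i : ℕ) < ℓ - q → ∀ c ∈ A,
      θ i (linForm c) ∈ Ideal.span {linForm c})
    (X : Submodule K (Fin ℓ → K))
    (hX : ∃ Carr : Finset (Fin ℓ → K), Carr ⊆ A ∧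
      X = ⨅ c ∈ Carr, LinearMap.ker (dualForm c))
    (hXB : ∀ c ∈ B, ¬ X ≤ LinearMap.ker (dualForm c)) :
    ℓ - q ≤ Module.finrank K X :=
  statement3_general A B q θ hspan hθA X hX hXB
end

section
/- Let A = A^k_ℓ(r) be the intermediate arrangement with exponents exp(A) = (1, r+1, 2r+1, ..., (ℓ−2)r+1, (ℓ−1)r − ℓ + k + 1), for ℓ ≥ 4, r ≥ 3, and 1 ≤ k ≤ ℓ−1 with r + k < ℓ. The possible exponent sequences of restrictions A^H for hyperplanes H ∈ A are those of A^{k−1}_{ℓ−1}(r), A^k_{ℓ−1}(r), A^{k+1}_{ℓ−1}(r), and A^{ℓ−1}_{ℓ−1}(r), namely (1, r+1, ..., (ℓ−3)r+1, (ℓ−2)r − (ℓ−1) + k') for k' ∈ {k−1, k, k+1, ℓ−1}. None of these equals the sequence (1, r+1, ..., (ℓ−2)r+1) of the ℓ−1 smallest exponents of A. Hence there is no hyperplane restriction realizing the ℓ−1 smallest exponents of A. -/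
/-!
Both exponent multisets contain the progression `1, r+1, …, (ℓ−3)r+1` plus one extra exponent,
since removing the top `(ℓ−2)r+1` from `exp(A)` leaves `(ℓ−1)r−ℓ+k+1` as the extra one.
Cancelling the progression, a restriction of type `A^{k'}_{ℓ−1}(r)` would need `k' = r+k−1`,
which lies strictly between `k+1` and `ℓ−1` because `r ≥ 3` and `r+k < ℓ`.
-/

def progressionExps (n : ℕ) (d : ℤ) : Multiset ℤ :=
  Multiset.map (fun j : Fin n => ((j : ℕ) : ℤ) * d + 1) Finset.univ.val

theorem progressionExps_succ (n : ℕ) (d : ℤ) :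
    progressionExps (n + 1) d = (n * d + 1) ::ₘ progressionExps n d := by
  rw [progressionExps, Fin.univ_castSuccEmb, Finset.cons_val, Finset.map_val, Multiset.map_cons,
    Multiset.map_map]
  rfl

theorem progressionExps_succ_add_singleton_erase (n : ℕ) (d a : ℤ) :
    (progressionExps (n + 1) d + {a}).erase (n * d + 1) = progressionExps n d + {a} := by
  rw [progressionExps_succ, Multiset.cons_add, Multiset.erase_cons_head]

theorem statement14_general (ℓ r k : ℕ) (hr : 3 ≤ r)
    (hrk : r + k < ℓ)
    (expA : Multiset ℤ)
    (hexpA : expA =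
      Multiset.map (fun j : Fin (ℓ - 1) => ((j : ℕ) : ℤ) * r + 1) Finset.univ.val +
        {((ℓ : ℤ) - 1) * r - ℓ + k + 1})
    (restExp : ℕ → Multiset ℤ)
    (hrest : ∀ k', restExp k' =
      Multiset.map (fun j : Fin (ℓ - 2) => ((j : ℕ) : ℤ) * r + 1) Finset.univ.val +
        {((ℓ : ℤ) - 2) * r - ((ℓ : ℤ) - 1) + k' + 1}) :
    ((ℓ : ℤ) - 1) * r - ℓ + k + 1 < ((ℓ : ℤ) - 2) * r + 1 ∧
      ∀ k' ∈ ({k - 1, k, k + 1, ℓ - 1} : Finset ℕ),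
        restExp k' ≠ expA.erase (((ℓ : ℤ) - 2) * r + 1) := by
  obtain ⟨n, rfl⟩ : ∃ n, ℓ = n + 2 := ⟨ℓ - 2, by omega⟩
  have hrk' : (r : ℤ) + k < n + 2 := by exact_mod_cast hrk
  refine ⟨by push_cast; linarith, fun k' hk' heq => ?_⟩
  set a : ℤ := (((n + 2 : ℕ) : ℤ) - 1) * r - (n + 2 : ℕ) + k + 1
  set b : ℤ := (((n + 2 : ℕ) : ℤ) - 2) * r - (((n + 2 : ℕ) : ℤ) - 1) + k' + 1
  have hexpA' : expA = progressionExps (n + 1) r + {a} := hexpA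
  have hrest' : restExp k' = progressionExps n r + {b} := hrest k'
  have htop : (((n + 2 : ℕ) : ℤ) - 2) * r + 1 = n * r + 1 := by push_cast; ring
  rw [hrest', hexpA', htop, progressionExps_succ_add_singleton_erase] at heq
  have hab : b = a := Multiset.singleton_inj.mp (add_right_injective _ heq)
  have hk'_eq : (k' : ℤ) = r + k - 1 := by simp only [a, b] at hab; push_cast at hab; linarith
  simp only [Finset.mem_insert, Finset.mem_singleton] at hk'
  omega

/-- Lemma 6.5(ii) (failure of accuracy for intermediate arrangements, cf. Example 6.6):
let `A = A^k_ℓ(r)` with `ℓ ≥ 4`, `r ≥ 3`, `1 ≤ k ≤ ℓ−1` and `r + k < ℓ`, with exponent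
multiset `exp(A) = {1, r+1, …, (ℓ−2)r+1} ∪ {(ℓ−1)r−ℓ+k+1}`.  The exponent multisets of
the hyperplane restrictions `A^H` are those of `A^{k'}_{ℓ−1}(r)` for
`k' ∈ {k−1, k, k+1, ℓ−1}`, namely `{1, r+1, …, (ℓ−3)r+1} ∪ {(ℓ−2)r−(ℓ−1)+k'+1}`.
Then the largest exponent of `A` is `(ℓ−2)r+1`, and no restriction exponent multiset
equals the multiset of the `ℓ−1` smallest exponents of `A` (i.e. `exp(A)` with one copy
of its largest element `(ℓ−2)r+1` removed).  Hence no hyperplane restriction realizes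
the `ℓ−1` smallest exponents of `A`. -/
theorem statement14 (ℓ r k : ℕ) (hl : 4 ≤ ℓ) (hr : 3 ≤ r)
    (hk1 : 1 ≤ k) (hk2 : k ≤ ℓ - 1) (hrk : r + k < ℓ)
    (expA : Multiset ℤ)
    (hexpA : expA =
      Multiset.map (fun j : Fin (ℓ - 1) => ((j : ℕ) : ℤ) * r + 1) Finset.univ.val +
        {((ℓ : ℤ) - 1) * r - ℓ + k + 1})
    (restExp : ℕ → Multiset ℤ)
    (hrest : ∀ k', restExp k' =
      Multiset.map (fun j : Fin (ℓ - 2) => ((j : ℕ) : ℤ) * r + 1) Finset.univ.val +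
        {((ℓ : ℤ) - 2) * r - ((ℓ : ℤ) - 1) + k' + 1}) :
    ((ℓ : ℤ) - 1) * r - ℓ + k + 1 < ((ℓ : ℤ) - 2) * r + 1 ∧
      ∀ k' ∈ ({k - 1, k, k + 1, ℓ - 1} : Finset ℕ),
        restExp k' ≠ expA.erase (((ℓ : ℤ) - 2) * r + 1) :=
  statement14_general ℓ r k hr hrk expA hexpA restExp hrest
end
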